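/- For n ∈ ℕ and b ∈ ℝ, the function H(x,y) = y·(1-x)^{n+b} / F(x,y), where F(x,y) = y·(n-1)!·Σ_{ν=0}^{n-1} (-1)^{n+ν} (n+b-ν+1)_ν x^ν/ν! + (b+1)_n x^n, is a first integral of the system ẋ = x(1-x), ẏ = y(n + b x - y) on any open region where 1 - x > 0 and F ≠ 0; that is, x(1-x)·∂H/∂x + y(n + b x - y)·∂H/∂y = 0 on that region. -/

import Mathlib

/-- Pochhammer symbol `(c)_n = c(c+1)⋯(c+n-1)`. -/
noncomputable def poch (c : ℝ) (n : ℕ) : ℝ := ∏ i ∈ Finset.range n, (c + i)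

/-- The function `F(x,y) = y (n-1)! Σ_{ν=0}^{n-1} (-1)^{n+ν} (n+b-ν+1)_ν x^ν/ν! + (b+1)_n x^n`. -/
noncomputable def Fval (n : ℕ) (b : ℝ) (x y : ℝ) : ℝ :=
  y * (Nat.factorial (n - 1) : ℝ) *
      ∑ ν ∈ Finset.range n,
        (-1) ^ (n + ν) * poch ((n : ℝ) + b - ν + 1) ν * x ^ ν / (Nat.factorial ν : ℝ)
    + poch (b + 1) n * x ^ n

/-- The Darboux first integral `H(x,y) = y (1-x)^{n+b} / F(x,y)`. -/
noncomputable def Hval (n : ℕ) (b : ℝ) (x y : ℝ) : ℝ :=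
  y * (1 - x) ^ ((n : ℝ) + b) / Fval n b x y

/-!
Both `y (1-x)^{n+b}` and `F` are Darboux functions of the vector field
`X = x(1-x) ∂ₓ + y(n+bx-y) ∂_y` with the same cofactor `n(1-x) - y`, so their quotient `H`
is annihilated by `X`. For `F` this comes down to the recurrence
`(n+b-ν) c_ν = -(ν+1) c_{ν+1}` of its coefficients `c_ν = (-1)^{n+ν} (n+b-ν+1)_ν / ν!`,
which makes `x(1-x) S' + (n+b) x S` telescope to `-n c_n xⁿ` for `S = Σ_{ν<n} c_ν x^ν`;
the leading term `(b+1)_n xⁿ` of `F` is exactly what cancels this remainder.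
-/

open Finset Nat

theorem div_first_integral_of_same_cofactor {G F : ℝ → ℝ → ℝ} {x y P Q k Gx Gy Fx Fy : ℝ}
    (hGx : HasDerivAt (fun t => G t y) Gx x) (hGy : HasDerivAt (fun t => G x t) Gy y)
    (hFx : HasDerivAt (fun t => F t y) Fx x) (hFy : HasDerivAt (fun t => F x t) Fy y)
    (hF : F x y ≠ 0)
    (hG : P * Gx + Q * Gy = k * G x y) (hFk : P * Fx + Q * Fy = k * F x y) :
    P * deriv (fun t => G t y / F t y) x + Q * deriv (fun t => G x t / F x t) y = 0 := by
  rw [(hGx.fun_div hFx hF).deriv, (hGy.fun_div hFy hF).deriv]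
  field_simp
  linear_combination F x y * hG - G x y * hFk

theorem sum_telescope_of_coeff_recurrence {p : ℝ} {c : ℕ → ℝ}
    (hc : ∀ ν : ℕ, (p - ν) * c ν = -((ν + 1) * c (ν + 1))) (n : ℕ) (x : ℝ) :
    x * (1 - x) * ∑ ν ∈ range n, c ν * (ν * x ^ (ν - 1)) + p * x * ∑ ν ∈ range n, c ν * x ^ ν
      = -(n * c n * x ^ n) := by
  rw [mul_sum, mul_sum, ← sum_add_distrib]
  have hterm : ∀ ν ∈ range n,
      x * (1 - x) * (c ν * (ν * x ^ (ν - 1))) + p * x * (c ν * x ^ ν)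
        = ν * c ν * x ^ ν - ((ν + 1 : ℕ) : ℝ) * c (ν + 1) * x ^ (ν + 1) := by
    intro ν _
    cases ν with
    | zero => push_cast; linear_combination x * hc 0
    | succ m =>
      simp only [Nat.add_sub_cancel]
      have hm := hc (m + 1)
      push_cast at hm ⊢
      linear_combination x ^ (m + 2) * hm
  rw [sum_congr rfl hterm, sum_range_sub' (fun k => (k : ℝ) * c k * x ^ k)]
  simp

theorem poch_succ (c : ℝ) (k : ℕ) : poch c (k + 1) = c * poch (c + 1) k := by
  rw [poch, prod_range_succ', poch, mul_comm]
  push_cast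
  simp_rw [add_assoc, add_comm (1 : ℝ)]
  simp

/-- `c_ν` in `F = y (n-1)! Σ_{ν<n} c_ν x^ν + (b+1)_n xⁿ`. -/
noncomputable def darbouxCoeff (n : ℕ) (b : ℝ) (ν : ℕ) : ℝ :=
  (-1) ^ (n + ν) * poch ((n : ℝ) + b - ν + 1) ν / (ν ! : ℝ)

theorem darbouxCoeff_succ (n : ℕ) (b : ℝ) (ν : ℕ) :
    ((n : ℝ) + b - ν) * darbouxCoeff n b ν = -((ν + 1) * darbouxCoeff n b (ν + 1)) := by
  have hshift : (n : ℝ) + b - ((ν + 1 : ℕ) : ℝ) + 1 = (n : ℝ) + b - ν := by push_cast; ring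
  rw [darbouxCoeff, darbouxCoeff, hshift, poch_succ, ← add_assoc, pow_succ, factorial_succ]
  push_cast
  field_simp

theorem factorial_mul_darbouxCoeff_self {n : ℕ} (hn : 1 ≤ n) (b : ℝ) :
    ((n - 1)! : ℝ) * (n * darbouxCoeff n b n) = poch (b + 1) n := by
  have hfact : (n : ℝ) * ((n - 1)! : ℝ) = (n ! : ℝ) := by
    rw [← Nat.cast_mul, Nat.mul_factorial_pred (by omega)]
  rw [darbouxCoeff, Even.neg_one_pow ⟨n, rfl⟩, add_sub_cancel_left]
  field_simp
  linear_combination poch (b + 1) n * hfact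

section Fval

variable (n : ℕ) (b x y : ℝ)

theorem Fval_eq_sum :
    Fval n b x y = y * ((n - 1)! : ℝ) * ∑ ν ∈ range n, darbouxCoeff n b ν * x ^ ν
      + poch (b + 1) n * x ^ n := by
  simp only [Fval, darbouxCoeff, mul_div_right_comm]

theorem hasDerivAt_Fval_fst :
    HasDerivAt (fun t => Fval n b t y)
      (y * ((n - 1)! : ℝ) * ∑ ν ∈ range n, darbouxCoeff n b ν * (ν * x ^ (ν - 1))
        + poch (b + 1) n * (n * x ^ (n - 1))) x := by
  simp only [Fval_eq_sum]
  exact ((HasDerivAt.fun_sum fun ν _ => (hasDerivAt_pow ν x).const_mul _).const_mul _).add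
    ((hasDerivAt_pow n x).const_mul _)

theorem hasDerivAt_Fval_snd :
    HasDerivAt (fun t => Fval n b x t)
      (((n - 1)! : ℝ) * ∑ ν ∈ range n, darbouxCoeff n b ν * x ^ ν) y := by
  simp only [Fval_eq_sum, mul_assoc]
  exact (hasDerivAt_mul_const _).add_const _

end Fval

theorem Fval_darboux {n : ℕ} (hn : 1 ≤ n) (b x y : ℝ) :
    x * (1 - x) * (y * ((n - 1)! : ℝ) * ∑ ν ∈ range n, darbouxCoeff n b ν * (ν * x ^ (ν - 1))
        + poch (b + 1) n * (n * x ^ (n - 1)))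
      + y * ((n : ℝ) + b * x - y) * (((n - 1)! : ℝ) * ∑ ν ∈ range n, darbouxCoeff n b ν * x ^ ν)
      = (n * (1 - x) - y) * Fval n b x y := by
  have htel := sum_telescope_of_coeff_recurrence (darbouxCoeff_succ n b) n x
  have hlead := factorial_mul_darbouxCoeff_self hn b
  have hpow : x ^ (n - 1) * x = x ^ n := by rw [← pow_succ, Nat.sub_add_cancel hn]
  rw [Fval_eq_sum]
  linear_combination y * ((n - 1)! : ℝ) * htel - y * x ^ n * hlead
    + poch (b + 1) n * n * (1 - x) * hpow

/-- `H` is a first integral of `ẋ = x(1-x)`, `ẏ = y(n+bx-y)` on any region where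
`1 - x > 0` and `F ≠ 0`:  `x(1-x)H_x + y(n+bx-y)H_y = 0` there. -/
theorem H_first_integral (n : ℕ) (hn : 1 ≤ n) (b : ℝ) (x y : ℝ)
    (hx : 1 - x > 0) (hF : Fval n b x y ≠ 0) :
    x * (1 - x) * deriv (fun t => Hval n b t y) x
        + y * ((n : ℝ) + b * x - y) * deriv (fun t => Hval n b x t) y = 0 := by
  set p : ℝ := (n : ℝ) + b
  have hEx : HasDerivAt (fun t => y * (1 - t) ^ p) (y * (-1 * p * (1 - x) ^ (p - 1))) x :=
    (((hasDerivAt_id x).const_sub 1).rpow_const (Or.inl hx.ne')).const_mul y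
  have hEy : HasDerivAt (fun t => t * (1 - x) ^ p) ((1 - x) ^ p) y := hasDerivAt_mul_const _
  refine div_first_integral_of_same_cofactor (G := fun x y => y * (1 - x) ^ p) (F := Fval n b)
    (k := n * (1 - x) - y) hEx hEy (hasDerivAt_Fval_fst n b x y) (hasDerivAt_Fval_snd n b x y) hF
    ?_ (Fval_darboux hn b x y)
  rw [Real.rpow_sub_one hx.ne']
  field_simp
  ring
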